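/- Let (N,J,h) be a Kähler manifold, {e_j, Je_j}_{j=1}^n an orthonormal frame, and for Ξ a vector field define ⟨Ξ⟩_j = h(Ξ,e_j) + i h(Ξ,Je_j). With S^j_{p,q,r} defined as in the generalized Hasimoto framework, one has for all vector fields U, V, W: ⟨R(U,V)W⟩_j = Σ_{p,q,r=1}^n S^j_{p,q,r} (⟨U⟩_p conj(⟨V⟩_q) − ⟨V⟩_p conj(⟨U⟩_q)) ⟨W⟩_r. -/
import Mathlib


/-- The complex coordinate `⟨Ξ⟩_j = h(Ξ,e_j) + i h(Ξ,Je_j)` of a tangent vector `Ξ`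
with respect to the orthonormal frame `{e_j, Je_j}_{j=1}^n`. -/
noncomputable def braComp {E : Type*} [AddCommGroup E] [Module ℝ E]
    (h : LinearMap.BilinForm ℝ E) (J : E →ₗ[ℝ] E) {n : ℕ} (e : Fin n → E)
    (Ξ : E) (j : Fin n) : ℂ :=
  (h Ξ (e j) : ℂ) + Complex.I * (h Ξ (J (e j)) : ℂ)

/-- `S^j_{p,q,r} = (1/2)(R^{A,j}_{p,q,r} + i R^{B,j}_{p,q,r})` where
`R^{A,j}_{p,q,r} = h(R(e_p,e_q)e_r,e_j) + i h(R(e_p,e_q)e_r,Je_j)` and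
`R^{B,j}_{p,q,r} = h(R(e_p,Je_q)e_r,e_j) + i h(R(e_p,Je_q)e_r,Je_j)`. -/
noncomputable def Scomp {E : Type*} [AddCommGroup E] [Module ℝ E]
    (h : LinearMap.BilinForm ℝ E) (J : E →ₗ[ℝ] E)
    (R : E →ₗ[ℝ] E →ₗ[ℝ] E →ₗ[ℝ] E) {n : ℕ} (e : Fin n → E)
    (p q r j : Fin n) : ℂ :=
  (1 / 2 : ℂ) * (((h (R (e p) (e q) (e r)) (e j) : ℂ) +
      Complex.I * (h (R (e p) (e q) (e r)) (J (e j)) : ℂ)) +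
    Complex.I * ((h (R (e p) (J (e q)) (e r)) (e j) : ℂ) +
      Complex.I * (h (R (e p) (J (e q)) (e r)) (J (e j)) : ℂ)))

section Aux
variable {E : Type*} [AddCommGroup E] [Module ℝ E]
    (h : LinearMap.BilinForm ℝ E) (J : E →ₗ[ℝ] E) {n : ℕ} (e : Fin n → E)

lemma bra_add' (X Y : E) (j : Fin n) :
    braComp h J e (X + Y) j = braComp h J e X j + braComp h J e Y j := by
  simp [braComp]; ring

lemma bra_smul' (c : ℝ) (X : E) (j : Fin n) :
    braComp h J e (c • X) j = (c : ℂ) * braComp h J e X j := by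
  simp [braComp]; ring

lemma bra_neg' (X : E) (j : Fin n) :
    braComp h J e (-X) j = - braComp h J e X j := by
  simp [braComp]; ring

lemma bra_J' (hJJ : ∀ v, J (J v) = -v) (hJcompat : ∀ u v, h (J u) (J v) = h u v)
    (X : E) (j : Fin n) :
    braComp h J e (J X) j = Complex.I * braComp h J e X j := by
  have h1 : h (J X) (e j) = - h X (J (e j)) := by
    have h0 := hJcompat X (J (e j))
    rw [hJJ, map_neg] at h0
    linarith
  have h2 : h (J X) (J (e j)) = h X (e j) := hJcompat X (e j)
  rw [braComp, braComp, h1, h2]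
  push_cast
  linear_combination (-(h X (J (e j)) : ℂ)) * Complex.I_sq

lemma expand_one'
    (hcomplete : ∀ U : E,
      U = (∑ j : Fin n, h U (e j) • e j) + ∑ j : Fin n, h U (J (e j)) • J (e j))
    (f : E → ℂ) (hadd : ∀ x y, f (x + y) = f x + f y)
    (hsmul : ∀ (c : ℝ) (x : E), f (c • x) = (c : ℂ) * f x) (U : E) :
    f U = ∑ p : Fin n, ((h U (e p) : ℂ) * f (e p) + (h U (J (e p)) : ℂ) * f (J (e p))) := by
  have hsum : ∀ (g : Fin n → E), f (∑ p, g p) = ∑ p, f (g p) := fun g =>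
    map_sum (AddMonoidHom.mk' f hadd) g Finset.univ
  conv_lhs => rw [hcomplete U]
  rw [hadd, hsum, hsum]
  simp only [hsmul]
  rw [← Finset.sum_add_distrib]

lemma swap_half' (g g' : Fin n → Fin n → ℂ)
    (hk : ∀ p q, g p q + g q p = g' p q + g' q p) :
    (∑ p, ∑ q, g p q) = ∑ p, ∑ q, g' p q := by
  have e1 : ∀ (g : Fin n → Fin n → ℂ),
      (∑ p, ∑ q, (g p q + g q p)) = (∑ p, ∑ q, g p q) + (∑ p, ∑ q, g p q) := by
    intro g
    simp only [Finset.sum_add_distrib]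
    congr 1
    exact Finset.sum_comm
  have e2 : (∑ p, ∑ q, (g p q + g q p)) = ∑ p, ∑ q, (g' p q + g' q p) :=
    Finset.sum_congr rfl fun p _ => Finset.sum_congr rfl fun q _ => hk p q
  rw [e1, e1] at e2
  have e3 : (2 : ℂ) * (∑ p, ∑ q, g p q) = 2 * (∑ p, ∑ q, g' p q) := by
    rw [two_mul, two_mul]; exact e2
  exact mul_left_cancel₀ two_ne_zero e3

end Aux

/-- On a Kähler manifold `(N,J,h)` of complex dimension `n` with orthonormal frame
`{e_j, Je_j}_{j=1}^n`, for all tangent vectors (vector fields) `U, V, W`: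
`⟨R(U,V)W⟩_j = Σ_{p,q,r} S^j_{p,q,r} (⟨U⟩_p conj(⟨V⟩_q) − ⟨V⟩_p conj(⟨U⟩_q)) ⟨W⟩_r`. -/
theorem braComp_curvature_expansion
    {E : Type*} [AddCommGroup E] [Module ℝ E]
    (h : LinearMap.BilinForm ℝ E) (J : E →ₗ[ℝ] E)
    (R : E →ₗ[ℝ] E →ₗ[ℝ] E →ₗ[ℝ] E) {n : ℕ} (e : Fin n → E)
    (hsymm : ∀ u v, h u v = h v u)
    (hJJ : ∀ v, J (J v) = -v)
    (hJcompat : ∀ u v, h (J u) (J v) = h u v)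
    (he : ∀ p q, h (e p) (e q) = if p = q then 1 else 0)
    (heJ : ∀ p q, h (e p) (J (e q)) = 0)
    (hcomplete : ∀ U : E,
      U = (∑ j : Fin n, h U (e j) • e j) + ∑ j : Fin n, h U (J (e j)) • J (e j))
    (Ranti : ∀ X Y Z, R X Y Z = -(R Y X Z))
    (Rpair : ∀ X Y Z W, h (R X Y Z) W = h (R Z W X) Y)
    (Rbianchi : ∀ X Y Z, R X Y Z + R Y Z X + R Z X Y = 0)
    (RJ : ∀ X Y Z, R X Y (J Z) = J (R X Y Z))
    (RJleft : ∀ X Y Z, R (J X) Y Z = -(R X (J Y) Z)) :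
    ∀ (U V W : E) (j : Fin n),
      braComp h J e (R U V W) j =
        ∑ p : Fin n, ∑ q : Fin n, ∑ r : Fin n,
          Scomp h J R e p q r j *
            (braComp h J e U p * (starRingEnd ℂ) (braComp h J e V q) -
              braComp h J e V p * (starRingEnd ℂ) (braComp h J e U q)) *
            braComp h J e W r := by
  intro U V W j
  have braJ : ∀ (X : E) (k : Fin n),
      braComp h J e (J X) k = Complex.I * braComp h J e X k :=
    fun X k => bra_J' h J e hJJ hJcompat X k
  have braNeg : ∀ (X : E) (k : Fin n), braComp h J e (-X) k = - braComp h J e X k :=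
    fun X k => bra_neg' h J e X k
  have hS : ∀ p q r : Fin n, Scomp h J R e p q r j =
      (1 / 2 : ℂ) * (braComp h J e (R (e p) (e q) (e r)) j +
        Complex.I * braComp h J e (R (e p) (J (e q)) (e r)) j) := fun _ _ _ => rfl
  have eU : braComp h J e (R U V W) j =
      ∑ p : Fin n, ((h U (e p) : ℂ) * braComp h J e (R (e p) V W) j +
        (h U (J (e p)) : ℂ) * braComp h J e (R (J (e p)) V W) j) :=
    expand_one' h J e hcomplete (fun X => braComp h J e (R X V W) j)
      (fun x y => by simp only [map_add, LinearMap.add_apply]; exact bra_add' h J e _ _ j)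
      (fun c x => by simp only [map_smul, LinearMap.smul_apply]; exact bra_smul' h J e c _ j) U
  have eV : ∀ X : E, braComp h J e (R X V W) j =
      ∑ q : Fin n, ((h V (e q) : ℂ) * braComp h J e (R X (e q) W) j +
        (h V (J (e q)) : ℂ) * braComp h J e (R X (J (e q)) W) j) := fun X =>
    expand_one' h J e hcomplete (fun Y => braComp h J e (R X Y W) j)
      (fun x y => by simp only [map_add, LinearMap.add_apply]; exact bra_add' h J e _ _ j)
      (fun c x => by simp only [map_smul, LinearMap.smul_apply]; exact bra_smul' h J e c _ j) V
  have eW : ∀ X Y : E, braComp h J e (R X Y W) j =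
      ∑ r : Fin n, ((h W (e r) : ℂ) * braComp h J e (R X Y (e r)) j +
        (h W (J (e r)) : ℂ) * braComp h J e (R X Y (J (e r))) j) := fun X Y =>
    expand_one' h J e hcomplete (fun Z => braComp h J e (R X Y Z) j)
      (fun x y => by simp only [map_add]; exact bra_add' h J e _ _ j)
      (fun c x => by simp only [map_smul]; exact bra_smul' h J e c _ j) W
  rw [eU]
  simp only [eV]
  simp only [eW]
  simp only [RJ, braJ, RJleft, hJJ, map_neg, LinearMap.neg_apply, neg_neg, braNeg]
  simp only [hS]
  simp only [Finset.mul_sum, ← Finset.sum_add_distrib]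
  refine swap_half' _ _ fun p q => ?_
  rw [← Finset.sum_add_distrib, ← Finset.sum_add_distrib]
  refine Finset.sum_congr rfl fun r _ => ?_
  rw [show ((R (e q)) (e p)) (e r) = -(((R (e p)) (e q)) (e r)) from Ranti _ _ _,
    show ((R (e q)) (J (e p))) (e r) = ((R (e p)) (J (e q))) (e r) from by
      rw [Ranti, RJleft, neg_neg]]
  simp only [braNeg]
  simp only [braComp, map_add, map_mul, Complex.conj_ofReal, Complex.conj_I]
  linear_combination ((((h U (J (e p)) : ℂ) * (h V (J (e q)) : ℂ) -
        (h U (J (e q)) : ℂ) * (h V (J (e p)) : ℂ)) *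
        ((h (R (e p) (e q) (e r)) (e j) : ℂ) +
          Complex.I * (h (R (e p) (e q) (e r)) (J (e j)) : ℂ)) +
      ((h U (e p) : ℂ) * (h V (J (e q)) : ℂ) + (h U (e q) : ℂ) * (h V (J (e p)) : ℂ) -
        (h U (J (e p)) : ℂ) * (h V (e q) : ℂ) - (h U (J (e q)) : ℂ) * (h V (e p) : ℂ)) *
        ((h (R (e p) (J (e q)) (e r)) (e j) : ℂ) +
          Complex.I * (h (R (e p) (J (e q)) (e r)) (J (e j)) : ℂ))) *
      ((h W (e r) : ℂ) + Complex.I * (h W (J (e r)) : ℂ))) * Complex.I_sq
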